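/- arXiv:2510.17717 — 2 statements merged into one kernel-verified Lean document; each statement's English description precedes it below -/
import Mathlib

section
/- Let A, B, C, D be random variables taking values in finite sets on a common probability space. If I(B;D|C) = 0, then I(A;B|C) ≤ I(A;B|C,D). -/
noncomputable section
open scoped Classical
open Finset

/-- Probability of an event under a probability mass function `p` on a finite sample space. -/
def prEvt {Ω : Type*} [Fintype Ω] (p : Ω → ℝ) (E : Set Ω) : ℝ :=
  ∑ ω, if ω ∈ E then p ω else 0

/-- Conditional probability of `E` given `F`. -/
def cprEvt {Ω : Type*} [Fintype Ω] (p : Ω → ℝ) (E F : Set Ω) : ℝ :=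
  prEvt p (E ∩ F) / prEvt p F

/-- Shannon conditional entropy `H(X|Y)`, base 2. -/
def condEnt {Ω α β : Type*} [Fintype Ω] [Fintype α] [Fintype β]
    (p : Ω → ℝ) (X : Ω → α) (Y : Ω → β) : ℝ :=
  ∑ y : β, prEvt p {ω | Y ω = y} *
    ∑ x : α, cprEvt p {ω | X ω = x} {ω | Y ω = y} *
      Real.logb 2 ((cprEvt p {ω | X ω = x} {ω | Y ω = y})⁻¹)

/-- Conditional mutual information `I(X;Y|Z) = H(X|Z) - H(X|Y,Z)`. -/
def condMI {Ω α β γ : Type*} [Fintype Ω] [Fintype α] [Fintype β] [Fintype γ]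
    (p : Ω → ℝ) (X : Ω → α) (Y : Ω → β) (Z : Ω → γ) : ℝ :=
  condEnt p X Z - condEnt p X (fun ω => (Y ω, Z ω))

set_option linter.unusedSectionVars false
set_option linter.unusedVariables false

section aux
variable {Ω α β γ : Type*} [Fintype Ω] [Fintype α] [Fintype β] [Fintype γ]

def pr (p : Ω → ℝ) (X : Ω → α) (x : α) : ℝ := ∑ ω, if X ω = x then p ω else 0

lemma pr_nonneg (p : Ω → ℝ) (hp : ∀ ω, 0 ≤ p ω) (X : Ω → α) (x : α) : 0 ≤ pr p X x := by
  unfold pr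
  exact Finset.sum_nonneg fun ω _ => by split_ifs; exacts [hp ω, le_rfl]

lemma pr_congr {p : Ω → ℝ} {X : Ω → α} {x : α} {X' : Ω → β} {x' : β}
    (h : ∀ ω, X ω = x ↔ X' ω = x') : pr p X x = pr p X' x' := by
  unfold pr
  exact Finset.sum_congr rfl fun ω _ => by simp only [h ω]

lemma pr_mono {p : Ω → ℝ} (hp : ∀ ω, 0 ≤ p ω) {X : Ω → α} {x : α} {X' : Ω → β} {x' : β}
    (h : ∀ ω, X ω = x → X' ω = x') : pr p X x ≤ pr p X' x' := by
  unfold pr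
  refine Finset.sum_le_sum fun ω _ => ?_
  by_cases hω : X ω = x
  · simp [hω, h ω hω]
  · simp only [hω, if_false]
    split_ifs; exacts [hp ω, le_rfl]

lemma sum_pr (p : Ω → ℝ) (X : Ω → α) : ∑ x, pr p X x = ∑ ω, p ω := by
  unfold pr
  rw [Finset.sum_comm]
  exact Finset.sum_congr rfl fun ω _ => by simp

lemma pr_fst (p : Ω → ℝ) (X : Ω → α) (Y : Ω → β) (y : β) :
    ∑ x, pr p (fun ω => (X ω, Y ω)) (x, y) = pr p Y y := by
  unfold pr
  rw [Finset.sum_comm]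
  refine Finset.sum_congr rfl fun ω _ => ?_
  by_cases hY : Y ω = y <;> simp [Prod.ext_iff, hY]

lemma prEvt_eq_pr (p : Ω → ℝ) (Y : Ω → β) (y : β) :
    prEvt p {ω | Y ω = y} = pr p Y y := rfl

lemma cprEvt_eq (p : Ω → ℝ) (X : Ω → α) (Y : Ω → β) (x : α) (y : β) :
    cprEvt p {ω | X ω = x} {ω | Y ω = y}
      = pr p (fun ω => (X ω, Y ω)) (x, y) / pr p Y y := by
  unfold cprEvt prEvt pr
  congr 1
  exact Finset.sum_congr rfl fun ω _ => by simp [Prod.ext_iff, and_comm]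

lemma condEnt_eq (p : Ω → ℝ) (hp : ∀ ω, 0 ≤ p ω) (X : Ω → α) (Y : Ω → β) :
    condEnt p X Y = ∑ y, ∑ x, pr p (fun ω => (X ω, Y ω)) (x, y) *
      Real.logb 2 (pr p Y y / pr p (fun ω => (X ω, Y ω)) (x, y)) := by
  unfold condEnt
  refine Finset.sum_congr rfl fun y _ => ?_
  rw [prEvt_eq_pr, Finset.mul_sum]
  refine Finset.sum_congr rfl fun x _ => ?_
  rw [cprEvt_eq]
  set t := pr p Y y with ht
  set j := pr p (fun ω => (X ω, Y ω)) (x, y) with hj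
  by_cases h0 : t = 0
  · have hj0 : j = 0 := le_antisymm (h0 ▸ pr_mono hp (fun ω hω => by
      simpa using congrArg Prod.snd hω)) (pr_nonneg p hp _ _)
    simp [h0, hj0]
  · have htj : t * (j / t) = j := by field_simp
    rw [inv_div, ← mul_assoc, htj]

end aux

def reassocEquiv (β γ δ : Type*) : δ × (β × γ) ≃ (β × δ) × γ :=
  ⟨fun q => ((q.2.1, q.1), q.2.2), fun q => (q.1.2, (q.1.1, q.2)),
    fun ⟨w, y, z⟩ => rfl, fun ⟨⟨y, w⟩, z⟩ => rfl⟩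

section aux2
variable {Ω α β γ δ : Type*} [Fintype Ω] [Fintype α] [Fintype β] [Fintype γ] [Fintype δ]

lemma condEnt_comp_equiv (p : Ω → ℝ) (X : Ω → α) (Y : Ω → β) (e : β ≃ γ) :
    condEnt p X (fun ω => e (Y ω)) = condEnt p X Y := by
  unfold condEnt
  refine Fintype.sum_equiv e.symm _ _ fun y' => ?_
  have hs : {ω | e (Y ω) = y'} = {ω | Y ω = e.symm y'} := by
    ext ω; exact e.apply_eq_iff_eq_symm_apply
  rw [hs]

lemma condMI_comp_equiv_mid (p : Ω → ℝ) (X : Ω → α) (Y : Ω → β) (Z : Ω → γ) (e : β ≃ δ) :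
    condMI p X (fun ω => e (Y ω)) Z = condMI p X Y Z := by
  unfold condMI
  have : (fun ω => (e (Y ω), Z ω)) = (fun ω => (e.prodCongr (Equiv.refl γ)) ((Y ω, Z ω))) := rfl
  rw [this, condEnt_comp_equiv p X (fun ω => (Y ω, Z ω)) (e.prodCongr (Equiv.refl γ))]

lemma condMI_comp_equiv_right (p : Ω → ℝ) (X : Ω → α) (Y : Ω → β) (Z : Ω → γ) (e : γ ≃ δ) :
    condMI p X Y (fun ω => e (Z ω)) = condMI p X Y Z := by
  unfold condMI
  have h1 : (fun ω => (Y ω, e (Z ω))) = (fun ω => ((Equiv.refl β).prodCongr e) ((Y ω, Z ω))) := rfl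
  rw [condEnt_comp_equiv p X Z e, h1,
    condEnt_comp_equiv p X (fun ω => (Y ω, Z ω)) ((Equiv.refl β).prodCongr e)]

lemma condMI_chain (p : Ω → ℝ) (X : Ω → α) (Y : Ω → β) (W : Ω → δ) (Z : Ω → γ) :
    condMI p X (fun ω => (Y ω, W ω)) Z
      = condMI p X Y Z + condMI p X W (fun ω => (Y ω, Z ω)) := by
  unfold condMI
  have : (fun ω => ((Y ω, W ω), Z ω)) = (fun ω => reassocEquiv β γ δ ((W ω, (Y ω, Z ω)))) := rfl
  rw [this, condEnt_comp_equiv p X (fun ω => (W ω, (Y ω, Z ω))) (reassocEquiv β γ δ)]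
  ring

end aux2

section aux3
variable {Ω α β γ : Type*} [Fintype Ω] [Fintype α] [Fintype β] [Fintype γ]

lemma pr_snd_mid (p : Ω → ℝ) (X : Ω → α) (Y : Ω → β) (Z : Ω → γ) (x : α) (z : γ) :
    ∑ y, pr p (fun ω => (X ω, (Y ω, Z ω))) (x, (y, z))
      = pr p (fun ω => (X ω, Z ω)) (x, z) := by
  unfold pr
  rw [Finset.sum_comm]
  refine Finset.sum_congr rfl fun ω _ => ?_
  by_cases hX : X ω = x <;> by_cases hZ : Z ω = z <;> simp [Prod.ext_iff, hX, hZ]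

lemma condMI_eq (p : Ω → ℝ) (hp : ∀ ω, 0 ≤ p ω) (X : Ω → α) (Y : Ω → β) (Z : Ω → γ) :
    condMI p X Y Z = ∑ z, ∑ x, ∑ y,
      pr p (fun ω => (X ω, (Y ω, Z ω))) (x, (y, z)) *
        Real.logb 2 (pr p (fun ω => (X ω, (Y ω, Z ω))) (x, (y, z)) * pr p Z z /
          (pr p (fun ω => (X ω, Z ω)) (x, z) * pr p (fun ω => (Y ω, Z ω)) (y, z))) := by
  unfold condMI
  have hA : condEnt p X Z = ∑ z, ∑ x, ∑ y,
      pr p (fun ω => (X ω, (Y ω, Z ω))) (x, (y, z)) *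
        Real.logb 2 (pr p Z z / pr p (fun ω => (X ω, Z ω)) (x, z)) := by
    rw [condEnt_eq p hp X Z]
    refine Finset.sum_congr rfl fun z _ => Finset.sum_congr rfl fun x _ => ?_
    rw [← pr_snd_mid p X Y Z x z, Finset.sum_mul]
  have hB : condEnt p X (fun ω => (Y ω, Z ω)) = ∑ z, ∑ x, ∑ y,
      pr p (fun ω => (X ω, (Y ω, Z ω))) (x, (y, z)) *
        Real.logb 2 (pr p (fun ω => (Y ω, Z ω)) (y, z) /
          pr p (fun ω => (X ω, (Y ω, Z ω))) (x, (y, z))) := by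
    rw [condEnt_eq p hp X (fun ω => (Y ω, Z ω)), Fintype.sum_prod_type, Finset.sum_comm]
    exact Finset.sum_congr rfl fun z _ => Finset.sum_comm
  rw [hA, hB, ← Finset.sum_sub_distrib]
  refine Finset.sum_congr rfl fun z _ => ?_
  rw [← Finset.sum_sub_distrib]
  refine Finset.sum_congr rfl fun x _ => ?_
  rw [← Finset.sum_sub_distrib]
  refine Finset.sum_congr rfl fun y _ => ?_
  set J3 := pr p (fun ω => (X ω, (Y ω, Z ω))) (x, (y, z)) with hJ3
  set JXZ := pr p (fun ω => (X ω, Z ω)) (x, z) with hJXZ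
  set JYZ := pr p (fun ω => (Y ω, Z ω)) (y, z) with hJYZ
  set pZ := pr p Z z with hpZ
  by_cases h0 : J3 = 0
  · simp [h0]
  · have hJ3pos : 0 < J3 := lt_of_le_of_ne (pr_nonneg p hp _ _) (Ne.symm h0)
    have hXZ : J3 ≤ JXZ := pr_mono hp fun ω hω => by
      simp only [Prod.ext_iff] at hω ⊢; exact ⟨hω.1, hω.2.2⟩
    have hYZ : J3 ≤ JYZ := pr_mono hp fun ω hω => by
      simp only [Prod.ext_iff] at hω ⊢; exact ⟨hω.2.1, hω.2.2⟩
    have hZ : J3 ≤ pZ := pr_mono hp fun ω hω => by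
      simp only [Prod.ext_iff] at hω; exact hω.2.2
    have hXZ0 : JXZ ≠ 0 := ne_of_gt (lt_of_lt_of_le hJ3pos hXZ)
    have hYZ0 : JYZ ≠ 0 := ne_of_gt (lt_of_lt_of_le hJ3pos hYZ)
    have hZ0 : pZ ≠ 0 := ne_of_gt (lt_of_lt_of_le hJ3pos hZ)
    rw [Real.logb_div hZ0 hXZ0, Real.logb_div hYZ0 h0,
      Real.logb_div (mul_ne_zero h0 hZ0) (mul_ne_zero hXZ0 hYZ0),
      Real.logb_mul h0 hZ0, Real.logb_mul hXZ0 hYZ0]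
    ring

lemma condMI_symm (p : Ω → ℝ) (hp : ∀ ω, 0 ≤ p ω) (X : Ω → α) (Y : Ω → β) (Z : Ω → γ) :
    condMI p X Y Z = condMI p Y X Z := by
  rw [condMI_eq p hp X Y Z, condMI_eq p hp Y X Z]
  refine Finset.sum_congr rfl fun z _ => ?_
  rw [Finset.sum_comm]
  refine Finset.sum_congr rfl fun y _ => Finset.sum_congr rfl fun x _ => ?_
  have hJ : pr p (fun ω => (X ω, (Y ω, Z ω))) (x, (y, z))
      = pr p (fun ω => (Y ω, (X ω, Z ω))) (y, (x, z)) := by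
    refine pr_congr fun ω => ?_
    simp only [Prod.ext_iff]; tauto
  rw [hJ, mul_comm (pr p (fun ω => (X ω, Z ω)) (x, z)) (pr p (fun ω => (Y ω, Z ω)) (y, z))]

lemma gibbs {ι : Type*} [Fintype ι] (a b : ι → ℝ) (ha : ∀ i, 0 ≤ a i) (hb : ∀ i, 0 ≤ b i)
    (hab : ∀ i, b i = 0 → a i = 0) (hs : ∑ i, b i ≤ ∑ i, a i) :
    0 ≤ ∑ i, a i * Real.log (a i / b i) := by
  have key : ∀ i, a i * Real.log (b i / a i) ≤ b i - a i := by
    intro i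
    rcases eq_or_lt_of_le (ha i) with h0 | h0
    · rw [← h0]; simpa using hb i
    · have hbpos : 0 < b i := lt_of_le_of_ne (hb i)
        (fun hh => by have := hab i hh.symm; linarith)
      have hlog := Real.log_le_sub_one_of_pos (div_pos hbpos h0)
      calc a i * Real.log (b i / a i) ≤ a i * (b i / a i - 1) := by nlinarith
        _ = b i - a i := by field_simp
  have h2 : ∑ i, a i * Real.log (b i / a i) ≤ 0 := by
    calc ∑ i, a i * Real.log (b i / a i) ≤ ∑ i, (b i - a i) :=
          Finset.sum_le_sum fun i _ => key i
      _ = ∑ i, b i - ∑ i, a i := Finset.sum_sub_distrib _ _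
      _ ≤ 0 := by linarith
  have h3 : ∀ i, a i * Real.log (a i / b i) = -(a i * Real.log (b i / a i)) := by
    intro i
    have hh : Real.log (a i / b i) = -Real.log (b i / a i) := by
      rw [← inv_div (b i) (a i), Real.log_inv]
    rw [hh]; ring
  simp only [h3]
  rw [Finset.sum_neg_distrib]
  linarith

end aux3

section aux4
variable {Ω α β γ : Type*} [Fintype Ω] [Fintype α] [Fintype β] [Fintype γ]

lemma condMI_nonneg (p : Ω → ℝ) (hp : ∀ ω, 0 ≤ p ω) (hsum : ∑ ω, p ω = 1)
    (X : Ω → α) (Y : Ω → β) (Z : Ω → γ) : 0 ≤ condMI p X Y Z := by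
  rw [condMI_eq p hp X Y Z]
  set a : γ × α × β → ℝ := fun q =>
    pr p (fun ω => (X ω, (Y ω, Z ω))) (q.2.1, (q.2.2, q.1)) with ha_def
  set b : γ × α × β → ℝ := fun q =>
    pr p (fun ω => (X ω, Z ω)) (q.2.1, q.1) * pr p (fun ω => (Y ω, Z ω)) (q.2.2, q.1)
      / pr p Z q.1 with hb_def
  have hterm : ∀ q : γ × α × β,
      pr p (fun ω => (X ω, (Y ω, Z ω))) (q.2.1, (q.2.2, q.1)) *
        Real.logb 2 (pr p (fun ω => (X ω, (Y ω, Z ω))) (q.2.1, (q.2.2, q.1)) * pr p Z q.1 /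
          (pr p (fun ω => (X ω, Z ω)) (q.2.1, q.1) * pr p (fun ω => (Y ω, Z ω)) (q.2.2, q.1)))
      = a q * Real.log (a q / b q) / Real.log 2 := by
    intro q
    rw [hb_def]
    simp only
    rw [div_div_eq_mul_div, Real.logb, div_eq_mul_inv (Real.log _), ← mul_assoc,
      mul_div_assoc]
    rfl
  have hsum_eq : (∑ z, ∑ x, ∑ y,
      pr p (fun ω => (X ω, (Y ω, Z ω))) (x, (y, z)) *
        Real.logb 2 (pr p (fun ω => (X ω, (Y ω, Z ω))) (x, (y, z)) * pr p Z z /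
          (pr p (fun ω => (X ω, Z ω)) (x, z) * pr p (fun ω => (Y ω, Z ω)) (y, z))))
      = (∑ q : γ × α × β, a q * Real.log (a q / b q)) / Real.log 2 := by
    rw [Finset.sum_div]
    rw [Fintype.sum_prod_type]
    refine Finset.sum_congr rfl fun z _ => ?_
    rw [Fintype.sum_prod_type]
    exact Finset.sum_congr rfl fun x _ => Finset.sum_congr rfl fun y _ => hterm (z, x, y)
  rw [hsum_eq]
  have hlog2 : 0 < Real.log 2 := Real.log_pos one_lt_two
  refine div_nonneg ?_ (le_of_lt hlog2)
  refine gibbs a b (fun q => pr_nonneg p hp _ _) ?_ ?_ ?_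
  · intro q
    exact div_nonneg (mul_nonneg (pr_nonneg p hp _ _) (pr_nonneg p hp _ _)) (pr_nonneg p hp _ _)
  · rintro ⟨z, x, y⟩ hb0
    simp only [hb_def] at hb0
    have ha0 : a (z, x, y) ≤ 0 := by
      rcases div_eq_zero_iff.mp hb0 with hmul | hz
      · rcases mul_eq_zero.mp hmul with h1 | h2
        · refine le_trans (pr_mono hp fun ω hω => ?_) (le_of_eq h1)
          simp only [Prod.ext_iff] at hω ⊢; exact ⟨hω.1, hω.2.2⟩
        · refine le_trans (pr_mono hp fun ω hω => ?_) (le_of_eq h2)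
          simp only [Prod.ext_iff] at hω ⊢; exact ⟨hω.2.1, hω.2.2⟩
      · refine le_trans (pr_mono hp fun ω hω => ?_) (le_of_eq hz)
        simp only [Prod.ext_iff] at hω; exact hω.2.2
    exact le_antisymm ha0 (pr_nonneg p hp _ _)
  · have hsa : ∑ q : γ × α × β, a q = 1 := by
      rw [Fintype.sum_prod_type]
      have : ∀ z, (∑ q : α × β, a (z, q)) = pr p Z z := by
        intro z
        rw [Fintype.sum_prod_type]
        have h1 : ∀ x, ∑ y, a (z, x, y) = pr p (fun ω => (X ω, Z ω)) (x, z) :=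
          fun x => pr_snd_mid p X Y Z x z
        calc (∑ x, ∑ y, a (z, x, y)) = ∑ x, pr p (fun ω => (X ω, Z ω)) (x, z) :=
              Finset.sum_congr rfl fun x _ => h1 x
          _ = pr p Z z := pr_fst p X Z z
      calc (∑ z, ∑ q : α × β, a (z, q)) = ∑ z, pr p Z z :=
            Finset.sum_congr rfl fun z _ => this z
        _ = 1 := by rw [sum_pr p Z, hsum]
    have hsb : ∑ q : γ × α × β, b q = 1 := by
      rw [Fintype.sum_prod_type]
      have hz : ∀ z, (∑ q : α × β, b (z, q)) = pr p Z z := by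
        intro z
        rw [Fintype.sum_prod_type]
        by_cases h0 : pr p Z z = 0
        · have hXZ0 : ∀ x, pr p (fun ω => (X ω, Z ω)) (x, z) = 0 := fun x =>
            le_antisymm (le_trans (pr_mono hp fun ω hω => by
              simp only [Prod.ext_iff] at hω; exact hω.2) (le_of_eq h0))
              (pr_nonneg p hp _ _)
          simp only [hb_def, hXZ0, zero_mul, zero_div, Finset.sum_const_zero, h0]
        · simp only [hb_def]
          calc (∑ x, ∑ y, pr p (fun ω => (X ω, Z ω)) (x, z) *
                  pr p (fun ω => (Y ω, Z ω)) (y, z) / pr p Z z)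
              = (∑ x, pr p (fun ω => (X ω, Z ω)) (x, z)) *
                  (∑ y, pr p (fun ω => (Y ω, Z ω)) (y, z)) / pr p Z z := by
                rw [Finset.sum_mul, Finset.sum_div]
                refine Finset.sum_congr rfl fun x _ => ?_
                rw [Finset.mul_sum, Finset.sum_div]
            _ = pr p Z z * pr p Z z / pr p Z z := by rw [pr_fst p X Z z, pr_fst p Y Z z]
            _ = pr p Z z := by rw [mul_div_assoc, div_self h0, mul_one]
      calc (∑ z, ∑ q : α × β, b (z, q)) = ∑ z, pr p Z z :=
            Finset.sum_congr rfl fun z _ => hz z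
        _ = 1 := by rw [sum_pr p Z, hsum]
    rw [hsa, hsb]

end aux4

/-- If `I(B;D|C) = 0` then `I(A;B|C) ≤ I(A;B|C,D)`. -/
theorem stmt0 {Ω α β γ δ : Type*} [Fintype Ω] [Fintype α] [Fintype β] [Fintype γ] [Fintype δ]
    (p : Ω → ℝ) (hp : ∀ ω, 0 ≤ p ω) (hsum : ∑ ω, p ω = 1)
    (A : Ω → α) (B : Ω → β) (C : Ω → γ) (D : Ω → δ)
    (h : condMI p B D C = 0) :
    condMI p A B C ≤ condMI p A B (fun ω => (C ω, D ω)) := by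
  have hBD : condMI p D B C = 0 := (condMI_symm p hp D B C).trans h
  have c1 : condMI p D (fun ω => (B ω, A ω)) C
      = condMI p D B C + condMI p D A (fun ω => (B ω, C ω)) := condMI_chain p D B A C
  have c2 : condMI p D (fun ω => (A ω, B ω)) C
      = condMI p D A C + condMI p D B (fun ω => (A ω, C ω)) := condMI_chain p D A B C
  have e12 : condMI p D (fun ω => (B ω, A ω)) C = condMI p D (fun ω => (A ω, B ω)) C := by
    have := condMI_comp_equiv_mid p D (fun ω => (A ω, B ω)) C (Equiv.prodComm α β)
    simpa using this
  have star : condMI p D A C ≤ condMI p D A (fun ω => (B ω, C ω)) := by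
    have hnn := condMI_nonneg p hp hsum D B (fun ω => (A ω, C ω))
    rw [e12, c2] at c1
    rw [hBD, zero_add] at c1
    linarith
  have c3 : condMI p A (fun ω => (B ω, D ω)) C
      = condMI p A B C + condMI p A D (fun ω => (B ω, C ω)) := condMI_chain p A B D C
  have c4 : condMI p A (fun ω => (D ω, B ω)) C
      = condMI p A D C + condMI p A B (fun ω => (D ω, C ω)) := condMI_chain p A D B C
  have e34 : condMI p A (fun ω => (B ω, D ω)) C = condMI p A (fun ω => (D ω, B ω)) C := by
    have := condMI_comp_equiv_mid p A (fun ω => (D ω, B ω)) C (Equiv.prodComm δ β)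
    simpa using this
  have s1 : condMI p A D (fun ω => (B ω, C ω)) = condMI p D A (fun ω => (B ω, C ω)) :=
    condMI_symm p hp A D _
  have s2 : condMI p A D C = condMI p D A C := condMI_symm p hp A D C
  have efinal : condMI p A B (fun ω => (C ω, D ω)) = condMI p A B (fun ω => (D ω, C ω)) := by
    have := condMI_comp_equiv_right p A B (fun ω => (D ω, C ω)) (Equiv.prodComm δ γ)
    simpa using this
  linarith
end
end

section
/- Let R, K be positive integers, let γ ∈ (0,1] satisfy 2γK ≥ 1, and let ε ≥ 0. Let μ be a probability distribution on ({0,1}^K)^R whose support T satisfies |T| ≥ 2^{(1−γ)RK} and μ(x) ≤ (1+ε)/|T| for every x ∈ T. For a selector σ = (σ_1,…,σ_R) ∈ [K]^R, define the character χ_σ(x) := (−1)^{∑_{r=1}^R x_r(σ_r)}, where x_r(σ_r) denotes the σ_r-th bit of the r-th block of x. Then, for σ chosen uniformly at random from [K]^R, E_σ[ ( E_{x∼μ}[ χ_σ(x) ] )^2 ] ≤ (1+ε)^2 · (4γ)^R. -/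
noncomputable section
open Finset

/-- The character selecting one coordinate per block:
`χ_σ(x) = (-1)^{∑_r x_r(σ_r)}` for `x ∈ ({0,1}^K)^R` and a selector `σ ∈ [K]^R`. -/
def chiSel {R K : ℕ} (σ : Fin R → Fin K) (x : Fin R → Fin K → Bool) : ℝ :=
  ∏ r, (if x r (σ r) then (-1 : ℝ) else 1)


lemma choose_bound : ∀ (j i : ℕ), i ≤ j → (2*j).choose (2*i) ≤ j.choose i * (2*j-1)^i := by
  intro j i
  induction i with
  | zero => simp
  | succ i ih =>
    intro hij
    have hi : i ≤ j := by omega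
    have h1 := ih hi
    have e1 : (2*j).choose (2*i+1) * (2*i+1) = (2*j).choose (2*i) * (2*j - 2*i) :=
      Nat.choose_succ_right_eq (2*j) (2*i)
    have e2 : (2*j).choose (2*i+1+1) * (2*i+1+1) = (2*j).choose (2*i+1) * (2*j - (2*i+1)) :=
      Nat.choose_succ_right_eq (2*j) (2*i+1)
    have e3 : j.choose (i+1) * (i+1) = j.choose i * (j - i) :=
      Nat.choose_succ_right_eq j i
    have hcancel : (2*j).choose (2*(i+1)) * ((2*i+2)*(2*i+1))
        = (2*j).choose (2*i) * (2*j - 2*i) * (2*j - (2*i+1)) := by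
      have ha : (2*j).choose (2*(i+1)) * ((2*i+2)*(2*i+1))
          = ((2*j).choose (2*i+1+1) * (2*i+1+1)) * (2*i+1) := by ring_nf
      rw [ha, e2]
      have hb : (2*j).choose (2*i+1) * (2*j - (2*i+1)) * (2*i+1)
          = ((2*j).choose (2*i+1) * (2*i+1)) * (2*j - (2*i+1)) := by ring
      rw [hb, e1]
    have hs : (2*j - (2*i+1)) ≤ (2*i+1)*(2*j-1) := by
      calc 2*j - (2*i+1) ≤ 2*j-1 := by omega
      _ ≤ (2*i+1)*(2*j-1) := Nat.le_mul_of_pos_left _ (by omega)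
    have hsub1 : 2*j - 2*i = 2*(j-i) := by omega
    apply Nat.le_of_mul_le_mul_right (c := (2*i+2)*(2*i+1)) _ (by positivity)
    calc (2*j).choose (2*(i+1)) * ((2*i+2)*(2*i+1))
        = (2*j).choose (2*i) * (2*j - 2*i) * (2*j - (2*i+1)) := hcancel
      _ ≤ (j.choose i * (2*j-1)^i) * (2*j - 2*i) * ((2*i+1)*(2*j-1)) := by
          exact Nat.mul_le_mul (Nat.mul_le_mul h1 (le_refl _)) hs
      _ = (j.choose i * (j-i)) * ((2*j-1)^i * (2*j-1)) * (2*(2*i+1)) := by rw [hsub1]; ring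
      _ = (j.choose (i+1) * (i+1)) * ((2*j-1)^(i+1)) * (2*(2*i+1)) := by
          rw [← e3]; ring
      _ = j.choose (i+1) * (2*j-1)^(i+1) * ((2*i+2)*(2*i+1)) := by ring

lemma choose_bound' (j i : ℕ) (h : i ≤ j) :
    (2*j).choose (2*i) * (2*(j-i)-1)^(j-i) ≤ j.choose i * (2*j-1)^j := by
  have h1 : (2*(j-i)-1)^(j-i) ≤ (2*j-1)^(j-i) := Nat.pow_le_pow_left (by omega) _
  have h2 : (2*j).choose (2*i) * (2*(j-i)-1)^(j-i) ≤ (j.choose i * (2*j-1)^i) * (2*j-1)^(j-i) :=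
    Nat.mul_le_mul (choose_bound j i h) h1
  have h3 : i + (j-i) = j := by omega
  calc (2*j).choose (2*i) * (2*(j-i)-1)^(j-i) ≤ (j.choose i * (2*j-1)^i) * (2*j-1)^(j-i) := h2
    _ = j.choose i * (2*j-1)^(i + (j-i)) := by rw [pow_add]; ring
    _ = j.choose i * (2*j-1)^j := by rw [h3]


lemma even_binom (p q : ℝ) (n : ℕ) :
    (p+q)^(2*n) + (p-q)^(2*n)
      = 2 * ∑ i ∈ Finset.range (n+1), ((2*n).choose (2*i) : ℝ) * (p^2)^(n-i) * (q^2)^i := by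
  have h1 : (p+q)^(2*n) = ∑ k ∈ range (2*n+1), q^k * p^(2*n-k) * ((2*n).choose k : ℝ) := by
    rw [add_comm p q]; exact add_pow q p (2*n)
  have h2 : (p-q)^(2*n) = ∑ k ∈ range (2*n+1), (-q)^k * p^(2*n-k) * ((2*n).choose k : ℝ) := by
    rw [sub_eq_add_neg, add_comm]; exact add_pow (-q) p (2*n)
  rw [h1, h2, ← Finset.sum_add_distrib]
  have h3 : ∀ k ∈ range (2*n+1),
      q^k * p^(2*n-k) * ((2*n).choose k : ℝ) + (-q)^k * p^(2*n-k) * ((2*n).choose k : ℝ)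
      = (q^k + (-q)^k) * p^(2*n-k) * ((2*n).choose k : ℝ) := by intro k _; ring
  rw [Finset.sum_congr rfl h3]
  rw [← Finset.sum_filter_add_sum_filter_not (range (2*n+1)) (fun k => Even k)]
  have hodd : ∑ k ∈ (range (2*n+1)).filter (fun k => ¬ Even k),
      (q^k + (-q)^k) * p^(2*n-k) * ((2*n).choose k : ℝ) = 0 := by
    apply Finset.sum_eq_zero
    intro k hk
    have hk' : Odd k := Nat.not_even_iff_odd.mp (Finset.mem_filter.mp hk).2
    rw [hk'.neg_pow]
    ring
  rw [hodd, add_zero]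
  rw [Finset.mul_sum]
  apply Finset.sum_nbij' (fun k => k/2) (fun i => 2*i)
  · intro a ha
    simp only [Finset.mem_filter, Finset.mem_range] at ha
    simp only [Finset.mem_range]
    omega
  · intro a ha
    simp only [Finset.mem_range] at ha
    simp only [Finset.mem_filter, Finset.mem_range]
    exact ⟨by omega, even_two_mul a⟩
  · intro a ha
    simp only [Finset.mem_filter, Finset.mem_range] at ha
    obtain ⟨-, he⟩ := ha
    obtain ⟨c, hc⟩ := he
    omega
  · intro a _; omega
  · intro k hk
    simp only [Finset.mem_filter, Finset.mem_range] at hk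
    obtain ⟨hklt, hke⟩ := hk
    obtain ⟨i, hi⟩ := hke
    have hki : k = 2*i := by omega
    subst hki
    have h4 : (2*i)/2 = i := by omega
    rw [h4]
    have h5 : (-q)^(2*i) = (q^2)^i := by rw [pow_mul]; ring_nf
    have h6 : q^(2*i) = (q^2)^i := by rw [pow_mul]
    have h7 : p^(2*n-2*i) = (p^2)^(n-i) := by
      rw [← pow_mul]
      congr 1
      omega
    rw [h5, h6, h7]
    ring

lemma khintchine (K : ℕ) (a : Fin K → ℝ) :
    ∀ (s : Finset (Fin K)) (j : ℕ),
    ∑ y : Fin K → Bool, (∑ i ∈ s, (if y i then (-1:ℝ) else 1) * a i)^(2*j)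
      ≤ 2^K * ((2*j-1 : ℕ):ℝ)^j * (∑ i ∈ s, (a i)^2)^j := by
  intro s
  induction s using Finset.induction_on with
  | empty =>
    intro j
    rcases Nat.eq_zero_or_pos j with hj | hj
    · subst hj
      simp [Finset.card_univ]
    · have h2j : 2*j ≠ 0 := by omega
      simp [zero_pow h2j, zero_pow (by omega : j ≠ 0)]
  | @insert i₀ s' hi₀ ih =>
    intro j
    -- the flip involution
    set e : (Fin K → Bool) ≃ (Fin K → Bool) :=
      { toFun := fun y => Function.update y i₀ (!(y i₀))
        invFun := fun y => Function.update y i₀ (!(y i₀))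
        left_inv := by
          intro y
          simp [Function.update_idem, Function.update_self, Bool.not_not,
            Function.update_eq_self]
        right_inv := by
          intro y
          simp [Function.update_idem, Function.update_self, Bool.not_not,
            Function.update_eq_self] } with he
    set S' : (Fin K → Bool) → ℝ := fun y => ∑ i ∈ s', (if y i then (-1:ℝ) else 1) * a i with hS'
    set F : (Fin K → Bool) → ℝ :=
      fun y => (∑ i ∈ insert i₀ s', (if y i then (-1:ℝ) else 1) * a i)^(2*j) with hF
    have hS'e : ∀ (y : Fin K → Bool) (b : Bool), S' (Function.update y i₀ b) = S' y := by
      intro y b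
      apply Finset.sum_congr rfl
      intro i hi
      have : i ≠ i₀ := fun h => hi₀ (h ▸ hi)
      rw [Function.update_of_ne this]
    have hFy : ∀ y, F y = ((if y i₀ then (-1:ℝ) else 1) * a i₀ + S' y)^(2*j) := by
      intro y
      rw [hF]
      simp only []
      rw [Finset.sum_insert hi₀]
    have key : ∀ (b : Bool) (S c : ℝ),
        ((if b then (-1:ℝ) else 1) * c + S)^(2*j) + ((if !b then (-1:ℝ) else 1) * c + S)^(2*j)
          = (S + c)^(2*j) + (S - c)^(2*j) := by
      intro b S c
      cases b <;> norm_num <;> ring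
    have hpair : ∀ y, F y + F (e y) = (S' y + a i₀)^(2*j) + (S' y - a i₀)^(2*j) := by
      intro y
      rw [hFy, hFy]
      have hey : e y = Function.update y i₀ (!(y i₀)) := rfl
      rw [hey, hS'e, Function.update_self]
      exact key (y i₀) (S' y) (a i₀)
    have htwo : 2 * ∑ y : Fin K → Bool, F y
        = ∑ y : Fin K → Bool, ((S' y + a i₀)^(2*j) + (S' y - a i₀)^(2*j)) := by
      rw [← Finset.sum_congr rfl (fun y _ => hpair y), Finset.sum_add_distrib,
        Equiv.sum_comp e F, two_mul]
    have hexpand : ∑ y : Fin K → Bool, ((S' y + a i₀)^(2*j) + (S' y - a i₀)^(2*j))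
        = 2 * ∑ i ∈ range (j+1), ((2*j).choose (2*i) : ℝ) * (a i₀^2)^i
            * ∑ y : Fin K → Bool, ((S' y)^2)^(j-i) := by
      rw [Finset.sum_congr rfl (fun y _ => even_binom (S' y) (a i₀) j)]
      rw [← Finset.mul_sum, Finset.sum_comm]
      congr 1
      apply Finset.sum_congr rfl
      intro i _
      rw [Finset.mul_sum]
      apply Finset.sum_congr rfl
      intro y _
      ring
    have hQ : ∑ y : Fin K → Bool, F y
        = ∑ i ∈ range (j+1), ((2*j).choose (2*i) : ℝ) * (a i₀^2)^i
            * ∑ y : Fin K → Bool, ((S' y)^2)^(j-i) := by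
      have := htwo.trans hexpand
      linarith
    rw [hQ]
    -- bound each term
    have hbound : ∀ i ∈ range (j+1),
        ((2*j).choose (2*i) : ℝ) * (a i₀^2)^i * ∑ y : Fin K → Bool, ((S' y)^2)^(j-i)
          ≤ 2^K * (((j.choose i) * (2*j-1)^j : ℕ) : ℝ) * (a i₀^2)^i * (∑ i ∈ s', (a i)^2)^(j-i) := by
      intro i hi
      have hij : i ≤ j := by simpa using Nat.lt_succ_iff.mp (Finset.mem_range.mp hi)
      have hIH : ∑ y : Fin K → Bool, ((S' y)^2)^(j-i)
          ≤ 2^K * ((2*(j-i)-1 : ℕ):ℝ)^(j-i) * (∑ i ∈ s', (a i)^2)^(j-i) := by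
        have := ih (j-i)
        have hrw : ∀ y : Fin K → Bool, (S' y)^(2*(j-i)) = ((S' y)^2)^(j-i) := by
          intro y; rw [← pow_mul]
        rw [← Finset.sum_congr rfl (fun y _ => hrw y)]
        exact this
      have hnn1 : (0:ℝ) ≤ ((2*j).choose (2*i) : ℝ) * (a i₀^2)^i := by positivity
      have step1 : ((2*j).choose (2*i) : ℝ) * (a i₀^2)^i * ∑ y : Fin K → Bool, ((S' y)^2)^(j-i)
          ≤ ((2*j).choose (2*i) : ℝ) * (a i₀^2)^i
            * (2^K * ((2*(j-i)-1 : ℕ):ℝ)^(j-i) * (∑ i ∈ s', (a i)^2)^(j-i)) := by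
        apply mul_le_mul_of_nonneg_left _ hnn1
        exact hIH
      refine step1.trans ?_
      have hnat : ((2*j).choose (2*i) : ℝ) * ((2*(j-i)-1 : ℕ):ℝ)^(j-i)
          ≤ (((j.choose i) * (2*j-1)^j : ℕ) : ℝ) := by
        have := choose_bound' j i hij
        push_cast
        exact_mod_cast this
      have hnn2 : (0:ℝ) ≤ (a i₀^2)^i * (2^K * (∑ i ∈ s', (a i)^2)^(j-i)) := by
        have : (0:ℝ) ≤ (∑ i ∈ s', (a i)^2) := Finset.sum_nonneg (fun i _ => sq_nonneg _)
        positivity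
      calc ((2*j).choose (2*i) : ℝ) * (a i₀^2)^i
            * (2^K * ((2*(j-i)-1 : ℕ):ℝ)^(j-i) * (∑ i ∈ s', (a i)^2)^(j-i))
          = (((2*j).choose (2*i) : ℝ) * ((2*(j-i)-1 : ℕ):ℝ)^(j-i))
            * ((a i₀^2)^i * (2^K * (∑ i ∈ s', (a i)^2)^(j-i))) := by ring
        _ ≤ (((j.choose i) * (2*j-1)^j : ℕ) : ℝ)
            * ((a i₀^2)^i * (2^K * (∑ i ∈ s', (a i)^2)^(j-i))) := by
            exact mul_le_mul_of_nonneg_right hnat hnn2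
        _ = 2^K * (((j.choose i) * (2*j-1)^j : ℕ) : ℝ) * (a i₀^2)^i * (∑ i ∈ s', (a i)^2)^(j-i) := by
            ring
    refine (Finset.sum_le_sum hbound).trans ?_
    -- now sum up with add_pow
    rw [Finset.sum_insert hi₀]
    have hap : (a i₀^2 + ∑ i ∈ s', (a i)^2)^j
        = ∑ i ∈ range (j+1), (a i₀^2)^i * (∑ i ∈ s', (a i)^2)^(j-i) * ((j.choose i) : ℝ) :=
      add_pow _ _ j
    rw [hap]
    simp only [Finset.mul_sum]
    apply Finset.sum_le_sum
    intro i _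
    apply le_of_eq
    push_cast
    ring


lemma holder_pow {X : Type} [Fintype X] (m : ℕ) (hm : m ≠ 0) (u : Fin m → X → ℝ)
    (hu : ∀ i x, 0 ≤ u i x) :
    (∑ x : X, ∏ i, u i x)^m ≤ ∏ i, ∑ x : X, (u i x)^m := by
  by_cases hz : ∀ i, 0 < ∑ x : X, (u i x)^m
  · set N : Fin m → ℝ := fun i => ∑ x : X, (u i x)^m with hN
    have hNnn : ∀ i, 0 < N i := hz
    have hmR : ((m:ℝ)) ≠ 0 := Nat.cast_ne_zero.mpr hm
    have key : ∀ x : X, ∏ i, u i x ≤ (∏ i, (N i)^((m:ℝ)⁻¹)) * ((m:ℝ)⁻¹ * ∑ i, (u i x)^m / N i) := by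
      intro x
      have hAM := Real.geom_mean_le_arith_mean_weighted Finset.univ (fun _ => (m:ℝ)⁻¹)
        (fun i => (u i x)^m / N i) (fun i _ => by positivity)
        (by simp [Finset.card_univ]; field_simp)
        (fun i _ => div_nonneg (pow_nonneg (hu i x) m) (le_of_lt (hNnn i)))
      have hsimp : ∀ i : Fin m, ((u i x)^m / N i)^((m:ℝ)⁻¹) = u i x / (N i)^((m:ℝ)⁻¹) := by
        intro i
        rw [Real.div_rpow (pow_nonneg (hu i x) m) (le_of_lt (hNnn i))]
        congr 1
        rw [← Real.rpow_natCast (u i x) m, ← Real.rpow_mul (hu i x)]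
        rw [mul_inv_cancel₀ hmR, Real.rpow_one]
      calc ∏ i, u i x = (∏ i, (N i)^((m:ℝ)⁻¹)) * ∏ i, (u i x / (N i)^((m:ℝ)⁻¹)) := by
            rw [← Finset.prod_mul_distrib]
            apply Finset.prod_congr rfl
            intro i _
            rw [mul_div_cancel₀]
            exact ne_of_gt (Real.rpow_pos_of_pos (hNnn i) _)
        _ ≤ (∏ i, (N i)^((m:ℝ)⁻¹)) * ((m:ℝ)⁻¹ * ∑ i, (u i x)^m / N i) := by
            apply mul_le_mul_of_nonneg_left _
              (Finset.prod_nonneg (fun i _ => le_of_lt (Real.rpow_pos_of_pos (hNnn i) _)))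
            calc ∏ i, (u i x / (N i)^((m:ℝ)⁻¹)) = ∏ i, ((u i x)^m / N i)^((m:ℝ)⁻¹) := by
                  exact (Finset.prod_congr rfl (fun i _ => (hsimp i))).symm
              _ ≤ ∑ i, (m:ℝ)⁻¹ * ((u i x)^m / N i) := hAM
              _ = (m:ℝ)⁻¹ * ∑ i, (u i x)^m / N i := by rw [Finset.mul_sum]
    have hsum : ∑ x : X, ∏ i, u i x ≤ ∏ i, (N i)^((m:ℝ)⁻¹) := by
      calc ∑ x : X, ∏ i, u i x ≤ ∑ x : X, (∏ i, (N i)^((m:ℝ)⁻¹)) * ((m:ℝ)⁻¹ * ∑ i, (u i x)^m / N i) :=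
            Finset.sum_le_sum (fun x _ => key x)
        _ = (∏ i, (N i)^((m:ℝ)⁻¹)) * ((m:ℝ)⁻¹ * ∑ i, (∑ x : X, (u i x)^m) / N i) := by
            rw [← Finset.mul_sum, ← Finset.mul_sum]
            congr 2
            rw [Finset.sum_comm]
            apply Finset.sum_congr rfl
            intro i _
            rw [Finset.sum_div]
        _ = ∏ i, (N i)^((m:ℝ)⁻¹) := by
            have : ∀ i : Fin m, (∑ x : X, (u i x)^m) / N i = 1 := by
              intro i; rw [hN]; exact div_self (ne_of_gt (hNnn i))
            rw [Finset.sum_congr rfl (fun i _ => this i)]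
            simp [Finset.card_univ]
            field_simp
    calc (∑ x : X, ∏ i, u i x)^m ≤ (∏ i, (N i)^((m:ℝ)⁻¹))^m := by
          apply pow_le_pow_left₀ _ hsum
          exact Finset.sum_nonneg (fun x _ => Finset.prod_nonneg (fun i _ => hu i x))
      _ = ∏ i, N i := by
          rw [← Finset.prod_pow]
          apply Finset.prod_congr rfl
          intro i _
          rw [← Real.rpow_natCast ((N i)^((m:ℝ)⁻¹)) m, ← Real.rpow_mul (le_of_lt (hNnn i))]
          rw [inv_mul_cancel₀ hmR, Real.rpow_one]
  · push_neg at hz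
    obtain ⟨i₀, hi₀⟩ := hz
    have hNz : ∑ x : X, (u i₀ x)^m = 0 :=
      le_antisymm hi₀ (Finset.sum_nonneg (fun x _ => pow_nonneg (hu i₀ x) m))
    have hu0 : ∀ x : X, u i₀ x = 0 := by
      intro x
      have := (Finset.sum_eq_zero_iff_of_nonneg
        (fun x _ => pow_nonneg (hu i₀ x) m : ∀ x ∈ Finset.univ, (0:ℝ) ≤ (u i₀ x)^m)).mp hNz x (Finset.mem_univ x)
      exact pow_eq_zero_iff hm |>.mp this
    have hL : ∑ x : X, ∏ i, u i x = 0 := by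
      apply Finset.sum_eq_zero
      intro x _
      exact Finset.prod_eq_zero (Finset.mem_univ i₀) (hu0 x)
    rw [hL, zero_pow hm]
    apply Finset.prod_nonneg
    intro i _
    exact Finset.sum_nonneg (fun x _ => pow_nonneg (hu i x) m)

lemma block_step (K m : ℕ) (hm : m ≠ 0) (J : Type) [Fintype J] [DecidableEq J]
    (h : J → Fin K → ℝ) :
    ∑ y : Fin K → Bool, (∑ v : J, (∑ j : Fin K, (if y j then (-1:ℝ) else 1) * h v j)^2)^m
      ≤ 2^K * ((2*m-1 : ℕ):ℝ)^m * (∑ v : J, ∑ j : Fin K, (h v j)^2)^m := by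
  set D : J → (Fin K → Bool) → ℝ :=
    fun v y => (∑ j : Fin K, (if y j then (-1:ℝ) else 1) * h v j)^2 with hD
  have hD0 : ∀ v y, 0 ≤ D v y := fun v y => sq_nonneg _
  set A : J → ℝ := fun v => ∑ j : Fin K, (h v j)^2 with hA
  have hA0 : ∀ v, 0 ≤ A v := fun v => Finset.sum_nonneg (fun j _ => sq_nonneg _)
  have step1 : ∑ y : Fin K → Bool, (∑ v : J, D v y)^m
      = ∑ w : Fin m → J, ∑ y : Fin K → Bool, ∏ i, D (w i) y := by
    rw [Finset.sum_congr rfl (fun y _ => Fintype.sum_pow (fun v => D v y) m), Finset.sum_comm]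
  have step2 : ∀ w : Fin m → J,
      ∑ y : Fin K → Bool, ∏ i, D (w i) y ≤ 2^K * ((2*m-1 : ℕ):ℝ)^m * ∏ i, A (w i) := by
    intro w
    have hRHS0 : (0:ℝ) ≤ 2^K * ((2*m-1 : ℕ):ℝ)^m * ∏ i, A (w i) := by
      have : (0:ℝ) ≤ ∏ i, A (w i) := Finset.prod_nonneg (fun i _ => hA0 _)
      positivity
    apply le_of_pow_le_pow_left₀ hm hRHS0
    have h1 : (∑ y : Fin K → Bool, ∏ i, D (w i) y)^m
        ≤ ∏ i : Fin m, ∑ y : Fin K → Bool, (D (w i) y)^m :=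
      holder_pow m hm (fun i => D (w i)) (fun i y => hD0 _ _)
    have h2 : ∀ i : Fin m, ∑ y : Fin K → Bool, (D (w i) y)^m
        ≤ 2^K * ((2*m-1 : ℕ):ℝ)^m * (A (w i))^m := by
      intro i
      have hpt : ∀ y : Fin K → Bool,
          (D (w i) y)^m = (∑ j ∈ univ, (if y j then (-1:ℝ) else 1) * h (w i) j)^(2*m) := by
        intro y
        rw [hD]
        simp only []
        rw [← pow_mul]
      rw [Finset.sum_congr rfl (fun y _ => hpt y)]
      exact khintchine K (h (w i)) Finset.univ m
    have h3 : ∏ i : Fin m, (∑ y : Fin K → Bool, (D (w i) y)^m)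
        ≤ ∏ i : Fin m, (2^K * ((2*m-1 : ℕ):ℝ)^m * (A (w i))^m) := by
      apply Finset.prod_le_prod
      · intro i _
        exact Finset.sum_nonneg (fun y _ => pow_nonneg (hD0 _ _) m)
      · intro i _
        exact h2 i
    have h4 : ∏ i : Fin m, (2^K * ((2*m-1 : ℕ):ℝ)^m * (A (w i))^m)
        = (2^K * ((2*m-1 : ℕ):ℝ)^m * ∏ i, A (w i))^m := by
      rw [Finset.prod_mul_distrib, Finset.prod_mul_distrib, Finset.prod_const, Finset.prod_const,
        Finset.card_univ, Fintype.card_fin, mul_pow, mul_pow, Finset.prod_pow]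
    calc (∑ y : Fin K → Bool, ∏ i, D (w i) y)^m
        ≤ ∏ i : Fin m, ∑ y : Fin K → Bool, (D (w i) y)^m := h1
      _ ≤ ∏ i : Fin m, (2^K * ((2*m-1 : ℕ):ℝ)^m * (A (w i))^m) := h3
      _ = (2^K * ((2*m-1 : ℕ):ℝ)^m * ∏ i, A (w i))^m := h4
  calc ∑ y : Fin K → Bool, (∑ v : J, D v y)^m
      = ∑ w : Fin m → J, ∑ y : Fin K → Bool, ∏ i, D (w i) y := step1
    _ ≤ ∑ w : Fin m → J, (2^K * ((2*m-1 : ℕ):ℝ)^m * ∏ i, A (w i)) :=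
        Finset.sum_le_sum (fun w _ => step2 w)
    _ = 2^K * ((2*m-1 : ℕ):ℝ)^m * ∑ w : Fin m → J, ∏ i, A (w i) := by rw [← Finset.mul_sum]
    _ = 2^K * ((2*m-1 : ℕ):ℝ)^m * (∑ v : J, A v)^m := by rw [← Fintype.sum_pow]

lemma main_ineq (K m : ℕ) (hm : m ≠ 0) :
    ∀ (R : ℕ) (J : Type) [Fintype J] [DecidableEq J]
      (c : (Fin R → Fin K) → J → ℝ),
    ∑ x : Fin R → Fin K → Bool, (∑ v : J, (∑ σ : Fin R → Fin K, c σ v * chiSel σ x)^2)^m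
      ≤ 2^(R*K) * ((2*m-1 : ℕ):ℝ)^(R*m) * (∑ σ : Fin R → Fin K, ∑ v : J, (c σ v)^2)^m := by
  intro R
  induction R with
  | zero =>
    intro J _ _ c
    have hchi1 : ∀ (σ : Fin 0 → Fin K) (x : Fin 0 → Fin K → Bool), chiSel σ x = 1 := by
      intro σ x
      unfold chiSel
      simp
    have hx : ∀ f : (Fin 0 → Fin K → Bool) → ℝ,
        (∑ x, f x) = f (fun i => i.elim0) := by
      intro f
      apply Finset.sum_eq_single_of_mem _ (Finset.mem_univ _)
      intro b _ hb
      exact absurd (funext fun i => i.elim0) hb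
    have hσ : ∀ f : (Fin 0 → Fin K) → ℝ,
        (∑ σ, f σ) = f (fun i => i.elim0) := by
      intro f
      apply Finset.sum_eq_single_of_mem _ (Finset.mem_univ _)
      intro b _ hb
      exact absurd (funext fun i => i.elim0) hb
    simp only [Nat.zero_mul, pow_zero, one_mul]
    rw [hx (fun x => (∑ v : J, (∑ σ : Fin 0 → Fin K, c σ v * chiSel σ x)^2)^m)]
    rw [hσ (fun σ => ∑ v : J, (c σ v)^2)]
    apply le_of_eq
    congr 1
    apply Finset.sum_congr rfl
    intro v _
    rw [hσ (fun σ => c σ v * chiSel σ (fun i => i.elim0)), hchi1, mul_one]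
  | succ R ih =>
    intro J _ _ c
    -- block decomposition
    have hsum_x : ∀ F : (Fin (R+1) → Fin K → Bool) → ℝ,
        ∑ x, F x = ∑ y : Fin K → Bool, ∑ x' : Fin R → Fin K → Bool, F (Fin.cons y x') := by
      intro F
      rw [← Equiv.sum_comp (Fin.consEquiv fun _ => (Fin K → Bool)) F, Fintype.sum_prod_type]
      rfl
    have hsum_σ : ∀ F : (Fin (R+1) → Fin K) → ℝ,
        ∑ σ, F σ = ∑ j : Fin K, ∑ σ' : Fin R → Fin K, F (Fin.cons j σ') := by
      intro F
      rw [← Equiv.sum_comp (Fin.consEquiv fun _ => Fin K) F, Fintype.sum_prod_type]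
      rfl
    have hchi : ∀ (j : Fin K) (σ' : Fin R → Fin K) (y : Fin K → Bool) (x' : Fin R → Fin K → Bool),
        chiSel (Fin.cons j σ') (Fin.cons y x') = (if y j then (-1:ℝ) else 1) * chiSel σ' x' := by
      intro j σ' y x'
      unfold chiSel
      rw [Fin.prod_univ_succ]
      simp [Fin.cons_zero, Fin.cons_succ]
    set H : (Fin R → Fin K → Bool) → J → Fin K → ℝ :=
      fun x' v j => ∑ σ' : Fin R → Fin K, c (Fin.cons j σ') v * chiSel σ' x' with hH
    have hinner : ∀ (y : Fin K → Bool) (x' : Fin R → Fin K → Bool) (v : J),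
        ∑ σ : Fin (R+1) → Fin K, c σ v * chiSel σ (Fin.cons y x')
          = ∑ j : Fin K, (if y j then (-1:ℝ) else 1) * H x' v j := by
      intro y x' v
      rw [hsum_σ (fun σ => c σ v * chiSel σ (Fin.cons y x'))]
      apply Finset.sum_congr rfl
      intro j _
      rw [hH]
      simp only []
      rw [Finset.mul_sum]
      apply Finset.sum_congr rfl
      intro σ' _
      rw [hchi]
      ring
    -- rewrite LHS
    have hLHS : ∑ x : Fin (R+1) → Fin K → Bool,
        (∑ v : J, (∑ σ : Fin (R+1) → Fin K, c σ v * chiSel σ x)^2)^m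
        = ∑ x' : Fin R → Fin K → Bool, ∑ y : Fin K → Bool,
            (∑ v : J, (∑ j : Fin K, (if y j then (-1:ℝ) else 1) * H x' v j)^2)^m := by
      rw [hsum_x (fun x => (∑ v : J, (∑ σ : Fin (R+1) → Fin K, c σ v * chiSel σ x)^2)^m)]
      rw [Finset.sum_comm]
      apply Finset.sum_congr rfl
      intro x' _
      apply Finset.sum_congr rfl
      intro y _
      congr 1
      apply Finset.sum_congr rfl
      intro v _
      rw [hinner]
    rw [hLHS]
    -- apply block step pointwise
    have hblock : ∀ x' : Fin R → Fin K → Bool,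
        ∑ y : Fin K → Bool, (∑ v : J, (∑ j : Fin K, (if y j then (-1:ℝ) else 1) * H x' v j)^2)^m
          ≤ 2^K * ((2*m-1 : ℕ):ℝ)^m * (∑ v : J, ∑ j : Fin K, (H x' v j)^2)^m :=
      fun x' => block_step K m hm J (H x')
    have hmid : ∑ x' : Fin R → Fin K → Bool, ∑ y : Fin K → Bool,
        (∑ v : J, (∑ j : Fin K, (if y j then (-1:ℝ) else 1) * H x' v j)^2)^m
        ≤ 2^K * ((2*m-1 : ℕ):ℝ)^m * ∑ x' : Fin R → Fin K → Bool,
            (∑ v : J, ∑ j : Fin K, (H x' v j)^2)^m := by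
      rw [Finset.mul_sum]
      exact Finset.sum_le_sum (fun x' _ => hblock x')
    refine hmid.trans ?_
    -- apply induction hypothesis with J' = J × Fin K
    set c' : (Fin R → Fin K) → (J × Fin K) → ℝ := fun σ' p => c (Fin.cons p.2 σ') p.1 with hc'
    have hIH := ih (J × Fin K) c'
    have hreindex : ∀ x' : Fin R → Fin K → Bool,
        ∑ v : J, ∑ j : Fin K, (H x' v j)^2
          = ∑ p : J × Fin K, (∑ σ' : Fin R → Fin K, c' σ' p * chiSel σ' x')^2 := by
      intro x'
      rw [Fintype.sum_prod_type]
    have hcoeff : ∑ σ : Fin (R+1) → Fin K, ∑ v : J, (c σ v)^2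
        = ∑ σ' : Fin R → Fin K, ∑ p : J × Fin K, (c' σ' p)^2 := by
      rw [hsum_σ (fun σ => ∑ v : J, (c σ v)^2)]
      have hps : ∀ σ' : Fin R → Fin K,
          ∑ p : J × Fin K, (c' σ' p)^2 = ∑ v : J, ∑ j : Fin K, (c (Fin.cons j σ') v)^2 := by
        intro σ'
        rw [Fintype.sum_prod_type]
      rw [Finset.sum_congr rfl (fun σ' _ => hps σ')]
      rw [Finset.sum_comm]
      apply Finset.sum_congr rfl
      intro σ' _
      rw [Finset.sum_comm]
    have hre : ∑ x' : Fin R → Fin K → Bool, (∑ v : J, ∑ j : Fin K, (H x' v j)^2)^m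
        = ∑ x' : Fin R → Fin K → Bool,
            (∑ p : J × Fin K, (∑ σ' : Fin R → Fin K, c' σ' p * chiSel σ' x')^2)^m := by
      apply Finset.sum_congr rfl
      intro x' _
      rw [hreindex]
    rw [hre]
    have hc1 : (0:ℝ) ≤ 2^K * ((2*m-1 : ℕ):ℝ)^m := by positivity
    refine (mul_le_mul_of_nonneg_left hIH hc1).trans (le_of_eq ?_)
    rw [← hcoeff]
    rw [show (R+1)*K = K + R*K by ring, show (R+1)*m = m + R*m by ring, pow_add, pow_add]
    ring

lemma orth {R K : ℕ} (σ σ' : Fin R → Fin K) :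
    ∑ x : Fin R → Fin K → Bool, chiSel σ x * chiSel σ' x
      = if σ = σ' then ((2:ℝ)^(R*K)) else 0 := by
  have hfac : ∀ x : Fin R → Fin K → Bool, chiSel σ x * chiSel σ' x
      = ∏ r, ((if x r (σ r) then (-1:ℝ) else 1) * (if x r (σ' r) then (-1:ℝ) else 1)) := by
    intro x
    unfold chiSel
    rw [← Finset.prod_mul_distrib]
  rw [Finset.sum_congr rfl (fun x _ => hfac x)]
  rw [← Fintype.prod_sum (fun r (v : Fin K → Bool) =>
    (if v (σ r) then (-1:ℝ) else 1) * (if v (σ' r) then (-1:ℝ) else 1))]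
  by_cases h : σ = σ'
  · subst h
    rw [if_pos rfl]
    have hblock : ∀ r : Fin R, ∑ v : Fin K → Bool,
        ((if v (σ r) then (-1:ℝ) else 1) * (if v (σ r) then (-1:ℝ) else 1)) = 2^K := by
      intro r
      have : ∀ v : Fin K → Bool,
          ((if v (σ r) then (-1:ℝ) else 1) * (if v (σ r) then (-1:ℝ) else 1)) = 1 := by
        intro v
        by_cases hv : v (σ r) <;> simp [hv]
      rw [Finset.sum_congr rfl (fun v _ => this v)]
      simp [Finset.card_univ]
    rw [Finset.prod_congr rfl (fun r _ => hblock r)]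
    rw [Finset.prod_const, Finset.card_univ, Fintype.card_fin, ← pow_mul, mul_comm K R]
  · rw [if_neg h]
    have hne : ∃ r : Fin R, σ r ≠ σ' r := by
      by_contra hc
      push_neg at hc
      exact h (funext hc)
    obtain ⟨r₀, hr₀⟩ := hne
    apply Finset.prod_eq_zero (Finset.mem_univ r₀)
    have hsplit : ∀ v : Fin K → Bool,
        ((if v (σ r₀) then (-1:ℝ) else 1) * (if v (σ' r₀) then (-1:ℝ) else 1))
        = ∏ l : Fin K, ((if l = σ r₀ then (if v l then (-1:ℝ) else 1) else 1)
            * (if l = σ' r₀ then (if v l then (-1:ℝ) else 1) else 1)) := by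
      intro v
      rw [Finset.prod_mul_distrib, Finset.prod_ite_eq' Finset.univ (σ r₀)
        (fun l => (if v l then (-1:ℝ) else 1)), Finset.prod_ite_eq' Finset.univ (σ' r₀)
        (fun l => (if v l then (-1:ℝ) else 1))]
      simp
    rw [Finset.sum_congr rfl (fun v _ => hsplit v)]
    rw [← Fintype.prod_sum (fun l (b : Bool) =>
      ((if l = σ r₀ then (if b then (-1:ℝ) else 1) else 1)
        * (if l = σ' r₀ then (if b then (-1:ℝ) else 1) else 1)))]
    apply Finset.prod_eq_zero (Finset.mem_univ (σ r₀))
    simp [hr₀]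

lemma bessel {R K : ℕ} (μ : (Fin R → Fin K → Bool) → ℝ) :
    ∑ σ : Fin R → Fin K, (∑ x, μ x * chiSel σ x)^2
      ≤ (2:ℝ)^(R*K) * ∑ x, (μ x)^2 := by
  set W : ℝ := (2:ℝ)^(R*K) with hW
  have hW0 : 0 < W := by rw [hW]; positivity
  set c : (Fin R → Fin K) → ℝ := fun σ => ∑ x, μ x * chiSel σ x with hc
  set P : (Fin R → Fin K → Bool) → ℝ := fun x => (∑ σ, c σ * chiSel σ x) / W with hP
  set Q : ℝ := ∑ σ : Fin R → Fin K, (c σ)^2 with hQ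
  have hmP : ∑ x, μ x * P x = Q / W := by
    have h1 : ∀ x, μ x * P x = ∑ σ, c σ * (μ x * chiSel σ x) / W := by
      intro x
      rw [hP]
      simp only []
      rw [← mul_div_assoc, Finset.mul_sum, Finset.sum_div]
      apply Finset.sum_congr rfl
      intro σ _
      ring
    rw [Finset.sum_congr rfl (fun x _ => h1 x), Finset.sum_comm]
    rw [hQ, Finset.sum_div]
    apply Finset.sum_congr rfl
    intro σ _
    have hcσ : ∑ x, μ x * chiSel σ x = c σ := rfl
    calc ∑ x, c σ * (μ x * chiSel σ x) / W
        = (c σ * ∑ x, μ x * chiSel σ x) / W := by rw [← Finset.sum_div, ← Finset.mul_sum]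
      _ = (c σ)^2 / W := by rw [hcσ, sq]
  have hP2 : ∑ x, (P x)^2 = Q / W := by
    have h1 : ∀ x, (P x)^2
        = (∑ σ : Fin R → Fin K, ∑ σ' : Fin R → Fin K,
            (c σ * c σ') * (chiSel σ x * chiSel σ' x)) / W^2 := by
      intro x
      rw [hP]
      simp only []
      rw [div_pow, sq, Finset.sum_mul_sum]
      congr 1
      apply Finset.sum_congr rfl
      intro σ _
      apply Finset.sum_congr rfl
      intro σ' _
      ring
    rw [Finset.sum_congr rfl (fun x _ => h1 x), ← Finset.sum_div]
    have h2 : ∑ x, ∑ σ : Fin R → Fin K, ∑ σ' : Fin R → Fin K,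
        (c σ * c σ') * (chiSel σ x * chiSel σ' x)
        = ∑ σ : Fin R → Fin K, ∑ σ' : Fin R → Fin K,
            (c σ * c σ') * ∑ x, (chiSel σ x * chiSel σ' x) := by
      rw [Finset.sum_comm]
      apply Finset.sum_congr rfl
      intro σ _
      rw [Finset.sum_comm]
      apply Finset.sum_congr rfl
      intro σ' _
      exact Eq.symm (Finset.mul_sum _ _ _)
    rw [h2]
    have h3 : ∀ σ : Fin R → Fin K,
        ∑ σ' : Fin R → Fin K, (c σ * c σ') * ∑ x, (chiSel σ x * chiSel σ' x)
          = (c σ)^2 * W := by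
      intro σ
      have hterm : ∀ σ' : Fin R → Fin K,
          (c σ * c σ') * ∑ x, (chiSel σ x * chiSel σ' x)
            = if σ = σ' then (c σ)^2 * W else 0 := by
        intro σ'
        rw [orth σ σ']
        by_cases hss : σ = σ'
        · subst hss
          rw [if_pos rfl, if_pos rfl, ← hW, sq]
        · rw [if_neg hss, if_neg hss, mul_zero]
      rw [Finset.sum_congr rfl (fun σ' _ => hterm σ'), Finset.sum_ite_eq]
      simp
    rw [Finset.sum_congr rfl (fun σ _ => h3 σ), ← Finset.sum_mul, ← hQ]
    rw [sq]
    rw [mul_comm W W]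
    rw [← div_div]
    rw [mul_div_assoc, div_self (ne_of_gt hW0), mul_one]
  have hnn : (0:ℝ) ≤ ∑ x, (μ x - P x)^2 := Finset.sum_nonneg (fun x _ => sq_nonneg _)
  have hexp : ∑ x, (μ x - P x)^2 = (∑ x, (μ x)^2) - 2*(Q/W) + Q/W := by
    have h1 : ∀ x, (μ x - P x)^2 = ((μ x)^2 - 2*(μ x * P x)) + (P x)^2 := fun x => by ring
    rw [Finset.sum_congr rfl (fun x _ => h1 x)]
    rw [Finset.sum_add_distrib, Finset.sum_sub_distrib, ← Finset.mul_sum, hmP, hP2]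
  have hfin : Q / W ≤ ∑ x, (μ x)^2 := by linarith
  have := (div_le_iff₀ hW0).mp hfin
  linarith


-- convex interpolation for 2^(c*t) under a linear function
lemma interp {c α β p q t : ℝ} (hpt : p ≤ t) (htq : t ≤ q)
    (hp : (2:ℝ)^(c*p) ≤ α*p+β) (hq : (2:ℝ)^(c*q) ≤ α*q+β) :
    (2:ℝ)^(c*t) ≤ α*t+β := by
  rcases eq_or_lt_of_le (hpt.trans htq) with heq | hlt
  · -- p = q hence t = p
    have hterm : t = p := le_antisymm (heq ▸ htq) hpt
    subst hterm
    exact hp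
  · set lam : ℝ := (t - p) / (q - p) with hlam
    have hqp : 0 < q - p := by linarith
    have hlam0 : 0 ≤ lam := by
      apply div_nonneg <;> linarith
    have hlam1 : lam ≤ 1 := by
      rw [hlam, div_le_one hqp]
      linarith
    have ha0 : 0 ≤ 1 - lam := by linarith
    have hab : (1 - lam) + lam = 1 := by ring
    have hcomb : (1-lam) * p + lam * q = t := by
      rw [hlam]
      field_simp
      ring
    have hconv := convexOn_exp.2 (Set.mem_univ (Real.log 2 * (c*p)))
      (Set.mem_univ (Real.log 2 * (c*q))) ha0 hlam0 hab
    have hxy : (1-lam) • (Real.log 2 * (c*p)) + lam • (Real.log 2 * (c*q))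
        = Real.log 2 * (c*t) := by
      simp only [smul_eq_mul]
      rw [← hcomb]
      ring
    rw [hxy] at hconv
    have hrw : ∀ z : ℝ, (2:ℝ)^(c*z) = Real.exp (Real.log 2 * (c*z)) := by
      intro z
      rw [Real.rpow_def_of_pos (by norm_num : (0:ℝ) < 2)]
    rw [hrw t]
    rw [hrw p] at hp
    rw [hrw q] at hq
    calc Real.exp (Real.log 2 * (c*t))
        ≤ (1-lam) • Real.exp (Real.log 2 * (c*p)) + lam • Real.exp (Real.log 2 * (c*q)) := hconv
      _ ≤ (1-lam) * (α*p+β) + lam * (α*q+β) := by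
          simp only [smul_eq_mul]
          have h1 := mul_le_mul_of_nonneg_left hp ha0
          have h2 := mul_le_mul_of_nonneg_left hq hlam0
          linarith
      _ = α * ((1-lam)*p + lam*q) + β := by ring
      _ = α * t + β := by rw [hcomb]

-- Case A numeric: 2^t ≤ 4*t for t ∈ [1/2, 4]
lemma caseA_numeric {t : ℝ} (h1 : 1/2 ≤ t) (h2 : t ≤ 4) : (2:ℝ)^t ≤ 4*t := by
  have := interp (c := 1) (α := 4) (β := 0) (p := 1/2) (q := 4) (t := t) h1 h2
    (by
      rw [one_mul]
      have : (2:ℝ)^((1:ℝ)/2) ≤ (2:ℝ)^(1:ℝ) :=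
        Real.rpow_le_rpow_of_exponent_le (by norm_num) (by norm_num)
      rw [Real.rpow_one] at this
      linarith)
    (by
      rw [one_mul]
      have : (2:ℝ)^((4:ℝ)) = 16 := by
        rw [show ((4:ℝ)) = ((4:ℕ):ℝ) by norm_num, Real.rpow_natCast]
        norm_num
      rw [this]
      norm_num)
  rw [one_mul] at this
  linarith

-- the nat-power inequality: (2u-1)^u ≤ 8 (2u-3)^u for u ≥ 3, in ℝ
lemma pow_8_bound {u : ℕ} (hu : 3 ≤ u) :
    ((2*u-1 : ℕ):ℝ)^u ≤ 8 * ((2*u-3 : ℕ):ℝ)^u := by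
  have hb : ((2*u-3 : ℕ):ℝ) = 2*(u:ℝ)-3 := by
    have : (2*u-3 : ℕ) = 2*u-3 := rfl
    push_cast [Nat.cast_sub (by omega : 3 ≤ 2*u)]
    ring
  have hn : ((2*u-1 : ℕ):ℝ) = 2*(u:ℝ)-1 := by
    push_cast [Nat.cast_sub (by omega : 1 ≤ 2*u)]
    ring
  set b : ℝ := 2*(u:ℝ)-3 with hbdef
  have hu3 : (3:ℝ) ≤ (u:ℝ) := by exact_mod_cast hu
  have hb3 : (3:ℝ) ≤ b := by rw [hbdef]; linarith
  have hb0 : (0:ℝ) < b := by linarith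
  have hfac : ((2*u-1 : ℕ):ℝ) = b * (1 + 2/b) := by
    rw [hn, mul_add, mul_one, show b * (2 / b) = 2 by have := ne_of_gt hb0; field_simp, hbdef]
    ring
  have hexp1 : (1 + 2/b) ≤ Real.exp (2/b) := by
    have := Real.add_one_le_exp (2/b)
    linarith
  have hexp2 : (1 + 2/b)^u ≤ Real.exp (2/b)^u := by
    apply pow_le_pow_left₀ _ hexp1
    positivity
  have hexp3 : Real.exp (2/b)^u = Real.exp ((u:ℝ) * (2/b)) := (Real.exp_nat_mul _ u).symm
  have hexp4 : (u:ℝ) * (2/b) ≤ 2 := by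
    have h : (u:ℝ) * (2/b) = 2*(u:ℝ)/b := by ring
    rw [h, div_le_iff₀ hb0]
    nlinarith
  have hexp5 : Real.exp ((u:ℝ)*(2/b)) ≤ Real.exp 2 := Real.exp_le_exp.mpr hexp4
  have hexp6 : Real.exp 2 ≤ 8 := by
    have h := Real.exp_one_lt_d9
    have h2 : Real.exp 2 = Real.exp 1 * Real.exp 1 := by
      rw [← Real.exp_add]; norm_num
    nlinarith [Real.exp_pos 1]
  calc ((2*u-1 : ℕ):ℝ)^u = b^u * (1 + 2/b)^u := by rw [hfac, mul_pow]
    _ ≤ b^u * Real.exp (2/b)^u := by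
        apply mul_le_mul_of_nonneg_left hexp2 (by positivity)
    _ = b^u * Real.exp ((u:ℝ)*(2/b)) := by rw [hexp3]
    _ ≤ b^u * 8 := by
        apply mul_le_mul_of_nonneg_left (hexp5.trans hexp6) (by positivity)
    _ = 8 * ((2*u-3:ℕ):ℝ)^u := by rw [← hb]; ring

-- endpoint 2: 2^((n-2)/u) * n ≤ 4*(n-2) where n = 2u-1, u ≥ 3
lemma endpoint2 {u : ℕ} (hu : 3 ≤ u) :
    (2:ℝ)^(((2*(u:ℝ)-1)-2)/(u:ℝ)) * (2*(u:ℝ)-1) ≤ 4*((2*(u:ℝ)-1)-2) := by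
  have hu3 : (3:ℝ) ≤ (u:ℝ) := by exact_mod_cast hu
  have hu0 : (0:ℝ) < (u:ℝ) := by linarith
  set X : ℝ := (2:ℝ)^(((2*(u:ℝ)-1)-2)/(u:ℝ)) with hX
  have hX0 : 0 < X := Real.rpow_pos_of_pos (by norm_num) _
  have hXu : X^u = (2:ℝ)^((2*u-3 : ℕ)) := by
    rw [hX, ← Real.rpow_natCast ((2:ℝ)^(((2*(u:ℝ)-1)-2)/(u:ℝ))) u, ← Real.rpow_mul (by norm_num)]
    rw [div_mul_cancel₀ _ (ne_of_gt hu0)]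
    rw [show ((2*(u:ℝ)-1)-2) = ((2*u-3 : ℕ):ℝ) by
      push_cast [Nat.cast_sub (by omega : 3 ≤ 2*u)]; ring]
    rw [Real.rpow_natCast]
  apply le_of_pow_le_pow_left₀ (by omega : u ≠ 0)
  · have h1 : ((2*u-3:ℕ):ℝ) = 2*(u:ℝ)-3 := by
      push_cast [Nat.cast_sub (by omega : 3 ≤ 2*u)]; ring
    nlinarith [hu3]
  · have hcast1 : (2*(u:ℝ)-1) = ((2*u-1:ℕ):ℝ) := by
      push_cast [Nat.cast_sub (by omega : 1 ≤ 2*u)]; ring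
    have hcast3 : ((2*(u:ℝ)-1)-2) = ((2*u-3:ℕ):ℝ) := by
      push_cast [Nat.cast_sub (by omega : 3 ≤ 2*u)]; ring
    calc (X * (2*(u:ℝ)-1))^u = X^u * (2*(u:ℝ)-1)^u := by rw [mul_pow]
      _ = (2:ℝ)^((2*u-3:ℕ)) * ((2*u-1:ℕ):ℝ)^u := by rw [hXu, hcast1]
      _ ≤ (2:ℝ)^((2*u-3:ℕ)) * (8 * ((2*u-3:ℕ):ℝ)^u) := by
          apply mul_le_mul_of_nonneg_left (pow_8_bound hu) (by positivity)
      _ = (2:ℝ)^((2*u-3:ℕ)) * 8 * ((2*u-3:ℕ):ℝ)^u := by ring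
      _ = (4:ℝ)^u * ((2*u-3:ℕ):ℝ)^u := by
          congr 1
          rw [show (8:ℝ) = 2^(3:ℕ) by norm_num, ← pow_add, show 2*u-3+3 = 2*u by omega,
            show (4:ℝ) = 2^(2:ℕ) by norm_num, ← pow_mul]
      _ = (4*((2*(u:ℝ)-1)-2))^u := by rw [hcast3, mul_pow]

lemma caseB_numeric (u : ℕ) (hu : 3 ≤ u) (t : ℝ) (h1 : 2*(u:ℝ)-3 ≤ t) (h2 : t ≤ 2*(u:ℝ)-1) :
    (2*(u:ℝ)-1) * (2:ℝ)^(t/(u:ℝ)) ≤ 4*t := by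
  have hu3 : (3:ℝ) ≤ (u:ℝ) := by exact_mod_cast hu
  have hu0 : (0:ℝ) < (u:ℝ) := by linarith
  have hn0 : (0:ℝ) < 2*(u:ℝ)-1 := by linarith
  have hend2 := endpoint2 hu
  have hp : (2:ℝ)^(((u:ℝ))⁻¹ * (2*(u:ℝ)-3)) ≤ (4/(2*(u:ℝ)-1))*(2*(u:ℝ)-3) + 0 := by
    rw [add_zero]
    have hXeq : ((u:ℝ))⁻¹ * (2*(u:ℝ)-3) = ((2*(u:ℝ)-1)-2)/(u:ℝ) := by
      field_simp
      ring
    rw [hXeq]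
    rw [div_mul_eq_mul_div, le_div_iff₀ hn0]
    calc (2:ℝ)^(((2*(u:ℝ)-1)-2)/(u:ℝ)) * (2*(u:ℝ)-1) ≤ 4*((2*(u:ℝ)-1)-2) := hend2
      _ = 4*(2*(u:ℝ)-3) := by ring
  have hq : (2:ℝ)^(((u:ℝ))⁻¹ * (2*(u:ℝ)-1)) ≤ (4/(2*(u:ℝ)-1))*(2*(u:ℝ)-1) + 0 := by
    rw [add_zero, div_mul_cancel₀ _ (ne_of_gt hn0)]
    have hle2 : ((u:ℝ))⁻¹ * (2*(u:ℝ)-1) ≤ 2 := by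
      rw [inv_mul_le_iff₀ hu0]
      linarith
    calc (2:ℝ)^(((u:ℝ))⁻¹ * (2*(u:ℝ)-1)) ≤ (2:ℝ)^((2:ℝ)) :=
          Real.rpow_le_rpow_of_exponent_le (by norm_num) hle2
      _ = 4 := by
          rw [show ((2:ℝ)) = ((2:ℕ):ℝ) by norm_num, Real.rpow_natCast]
          norm_num
  have := interp (c := ((u:ℝ))⁻¹) (α := 4/(2*(u:ℝ)-1)) (β := 0)
    (p := 2*(u:ℝ)-3) (q := 2*(u:ℝ)-1) (t := t) h1 h2 hp hq
  rw [add_zero] at this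
  have ht0 : ((u:ℝ))⁻¹ * t = t/(u:ℝ) := by ring
  rw [ht0] at this
  calc (2*(u:ℝ)-1) * (2:ℝ)^(t/(u:ℝ)) ≤ (2*(u:ℝ)-1) * ((4/(2*(u:ℝ)-1))*t) :=
        mul_le_mul_of_nonneg_left this (le_of_lt hn0)
    _ = 4*t := by field_simp

lemma caseB_choice {t : ℝ} (ht : 4 < t) :
    ∃ u : ℕ, 3 ≤ u ∧ (2*(u:ℝ)-1) * (2:ℝ)^(t/(u:ℝ)) ≤ 4*t := by
  refine ⟨⌈(t+1)/2⌉₊, ?_, ?_⟩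
  · have : (2:ℕ) < ⌈(t+1)/2⌉₊ := Nat.lt_ceil.mpr (by push_cast; linarith)
    omega
  · set u := ⌈(t+1)/2⌉₊ with hu
    have hu3 : (2:ℕ) < u := Nat.lt_ceil.mpr (by push_cast; linarith)
    apply caseB_numeric u (by omega)
    · have := Nat.ceil_lt_add_one (by linarith : (0:ℝ) ≤ (t+1)/2)
      rw [← hu] at this
      linarith
    · have := Nat.le_ceil ((t+1)/2)
      rw [← hu] at this
      linarith

/-- If `μ` is a nearly flat distribution on `({0,1}^K)^R` with support of size at least
`2^{(1-γ)RK}`, then a uniformly random one-coordinate-per-block character has small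
expected squared bias: `E_σ[(E_{x∼μ}[χ_σ(x)])²] ≤ (1+ε)²(4γ)^R`. -/
theorem stmt9 (R K : ℕ) (hR : 0 < R) (hK : 0 < K) (γ ε : ℝ)
    (hγ0 : 0 < γ) (hγ1 : γ ≤ 1) (hγK : 1 ≤ 2 * γ * K) (hε : 0 ≤ ε)
    (μ : (Fin R → Fin K → Bool) → ℝ) (hμ0 : ∀ x, 0 ≤ μ x) (hμ1 : ∑ x, μ x = 1)
    (T : Finset (Fin R → Fin K → Bool)) (hTdef : ∀ x, x ∈ T ↔ 0 < μ x)
    (hTcard : (2 : ℝ) ^ ((1 - γ) * R * K) ≤ (T.card : ℝ))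
    (hflat : ∀ x ∈ T, μ x ≤ (1 + ε) / T.card) :
    (∑ σ : Fin R → Fin K, (∑ x, μ x * chiSel σ x) ^ 2) / (K : ℝ) ^ R
      ≤ (1 + ε) ^ 2 * (4 * γ) ^ R := by
  classical
  have hK0 : (0:ℝ) < (K:ℝ) := by exact_mod_cast hK
  have hKR0 : (0:ℝ) < (K:ℝ)^R := by positivity
  have hεp : (0:ℝ) ≤ 1+ε := by linarith
  have h1ε : (1:ℝ) ≤ 1+ε := by linarith
  have h4γ : (0:ℝ) ≤ 4*γ := by linarith
  have hγK2 : 1/2 ≤ γ*(K:ℝ) := by linarith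
  have hT0 : (0:ℝ) < (T.card:ℝ) := lt_of_lt_of_le (Real.rpow_pos_of_pos two_pos _) hTcard
  have hC0 : ∀ x, μ x ≤ (1+ε)/(T.card:ℝ) := by
    intro x
    by_cases hx : x ∈ T
    · exact hflat x hx
    · have : ¬ (0 < μ x) := fun h => hx ((hTdef x).mpr h)
      have hμx : μ x = 0 := le_antisymm (not_lt.mp this) (hμ0 x)
      rw [hμx]
      exact div_nonneg hεp (le_of_lt hT0)
  set cc : (Fin R → Fin K) → ℝ := fun σ => ∑ x, μ x * chiSel σ x with hcc
  have hQ0 : (0:ℝ) ≤ ∑ σ : Fin R → Fin K, (cc σ)^2 :=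
    Finset.sum_nonneg (fun σ _ => sq_nonneg _)
  set Q : ℝ := ∑ σ : Fin R → Fin K, (cc σ)^2 with hQdef
  rw [div_le_iff₀ hKR0]
  -- common power bound
  have hpow : (2:ℝ)^(R*K) * ((1+ε)/(T.card:ℝ)) ≤ (1+ε) * (2:ℝ)^(γ*((R:ℝ)*(K:ℝ))) := by
    have hsplitpow : ((2:ℝ))^((R*K : ℕ)) = (2:ℝ)^((1-γ)*(R:ℝ)*(K:ℝ)) * (2:ℝ)^(γ*((R:ℝ)*(K:ℝ))) := by
      rw [← Real.rpow_add two_pos, ← Real.rpow_natCast 2 (R*K)]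
      congr 1
      push_cast
      ring
    have h1 : (2:ℝ)^(R*K) ≤ (T.card:ℝ) * (2:ℝ)^(γ*((R:ℝ)*(K:ℝ))) := by
      rw [hsplitpow]
      apply mul_le_mul_of_nonneg_right _ (Real.rpow_nonneg (by norm_num) _)
      exact hTcard
    calc (2:ℝ)^(R*K) * ((1+ε)/(T.card:ℝ)) = (1+ε) * ((2:ℝ)^(R*K) / (T.card:ℝ)) := by ring
      _ ≤ (1+ε) * (2:ℝ)^(γ*((R:ℝ)*(K:ℝ))) := by
          apply mul_le_mul_of_nonneg_left _ hεp
          rw [div_le_iff₀ hT0]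
          calc (2:ℝ)^(R*K) ≤ (T.card:ℝ) * (2:ℝ)^(γ*((R:ℝ)*(K:ℝ))) := h1
            _ = (2:ℝ)^(γ*((R:ℝ)*(K:ℝ))) * (T.card:ℝ) := by ring
  have hsum_sq : ∑ x, (μ x)^2 ≤ (1+ε)/(T.card:ℝ) := by
    calc ∑ x, (μ x)^2 ≤ ∑ x, ((1+ε)/(T.card:ℝ)) * μ x := by
          apply Finset.sum_le_sum
          intro x _
          have h1 := hC0 x
          have h2 := hμ0 x
          nlinarith
      _ = (1+ε)/(T.card:ℝ) := by rw [← Finset.mul_sum, hμ1, mul_one]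
  have hγsplit : (2:ℝ)^(γ*((R:ℝ)*(K:ℝ))) = ((2:ℝ)^(γ*(K:ℝ)))^R := by
    rw [← Real.rpow_natCast ((2:ℝ)^(γ*(K:ℝ))) R, ← Real.rpow_mul (by norm_num)]
    congr 1
    ring
  have hlast : ∀ W : ℝ, W ≤ (1+ε) * (4*(γ*(K:ℝ)))^R → W ≤ (1+ε)^2 * (4*γ)^R * (K:ℝ)^R := by
    intro W hW
    have hsp : (4*(γ*(K:ℝ)))^R = (4*γ)^R * (K:ℝ)^R := by
      rw [show 4*(γ*(K:ℝ)) = (4*γ)*(K:ℝ) by ring, mul_pow]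
    have h2 : (1+ε) ≤ (1+ε)^2 := by nlinarith
    have h3 : (0:ℝ) ≤ (4*γ)^R * (K:ℝ)^R := by positivity
    calc W ≤ (1+ε) * (4*(γ*(K:ℝ)))^R := hW
      _ = (1+ε) * ((4*γ)^R * (K:ℝ)^R) := by rw [hsp]
      _ ≤ (1+ε)^2 * ((4*γ)^R * (K:ℝ)^R) := mul_le_mul_of_nonneg_right h2 h3
      _ = (1+ε)^2 * (4*γ)^R * (K:ℝ)^R := by ring
  by_cases hcase : γ*(K:ℝ) ≤ 4
  · -- Parseval case
    apply hlast
    have hQb : Q ≤ (1+ε) * (2:ℝ)^(γ*((R:ℝ)*(K:ℝ))) := by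
      calc Q ≤ (2:ℝ)^(R*K) * ∑ x, (μ x)^2 := bessel μ
        _ ≤ (2:ℝ)^(R*K) * ((1+ε)/(T.card:ℝ)) := by
            apply mul_le_mul_of_nonneg_left hsum_sq (by positivity)
        _ ≤ (1+ε) * (2:ℝ)^(γ*((R:ℝ)*(K:ℝ))) := hpow
    have h2t : (2:ℝ)^(γ*(K:ℝ)) ≤ 4*(γ*(K:ℝ)) := caseA_numeric hγK2 hcase
    calc Q ≤ (1+ε) * (2:ℝ)^(γ*((R:ℝ)*(K:ℝ))) := hQb
      _ = (1+ε) * ((2:ℝ)^(γ*(K:ℝ)))^R := by rw [hγsplit]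
      _ ≤ (1+ε) * (4*(γ*(K:ℝ)))^R := by
          apply mul_le_mul_of_nonneg_left _ hεp
          exact pow_le_pow_left₀ (Real.rpow_nonneg (by norm_num) _) h2t R
  · -- hypercontractive case
    push_neg at hcase
    obtain ⟨u, hu3, hKN⟩ := caseB_choice hcase
    have hm0 : u ≠ 0 := by omega
    have hu0 : (0:ℝ) < (u:ℝ) := by exact_mod_cast Nat.pos_of_ne_zero hm0
    have hnval : ((2*u-1 : ℕ):ℝ) = 2*(u:ℝ)-1 := by
      push_cast [Nat.cast_sub (by omega : 1 ≤ 2*u)]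
      ring
    have hn0 : (0:ℝ) < 2*(u:ℝ)-1 := by
      have : (3:ℝ) ≤ (u:ℝ) := by exact_mod_cast hu3
      linarith
    set g : (Fin R → Fin K → Bool) → ℝ := fun x => ∑ σ, cc σ * chiSel σ x with hg
    have hgnn : ∀ x, (0:ℝ) ≤ (g x)^(2*u) := by
      intro x
      rw [pow_mul]
      positivity
    have hQg : Q = ∑ x, μ x * g x := by
      rw [hQdef]
      have h1 : ∀ σ, (cc σ)^2 = ∑ x, cc σ * (μ x * chiSel σ x) := by
        intro σ
        rw [sq, ← Finset.mul_sum]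
      rw [Finset.sum_congr rfl (fun σ _ => h1 σ), Finset.sum_comm]
      apply Finset.sum_congr rfl
      intro x _
      rw [hg]
      simp only []
      rw [Finset.mul_sum]
      apply Finset.sum_congr rfl
      intro σ _
      ring
    have hjensen : Q^(2*u) ≤ ∑ x, μ x * (g x)^(2*u) := by
      have hQabs : Q ≤ ∑ x, μ x * |g x| := by
        rw [hQg]
        apply Finset.sum_le_sum
        intro x _
        exact mul_le_mul_of_nonneg_left (le_abs_self _) (hμ0 x)
      have hnn : (0:ℝ) ≤ ∑ x, μ x * |g x| :=
        Finset.sum_nonneg (fun x _ => mul_nonneg (hμ0 x) (abs_nonneg _))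
      have hstep := Real.pow_arith_mean_le_arith_mean_pow Finset.univ μ (fun x => |g x|)
        (fun x _ => hμ0 x) hμ1 (fun x _ => abs_nonneg _) (2*u)
      calc Q^(2*u) ≤ (∑ x, μ x * |g x|)^(2*u) := pow_le_pow_left₀ hQ0 hQabs _
        _ ≤ ∑ x, μ x * |g x|^(2*u) := hstep
        _ = ∑ x, μ x * (g x)^(2*u) := by
            apply Finset.sum_congr rfl
            intro x _
            congr 1
            rw [pow_mul, pow_mul, sq_abs]
    have hmain : ∑ x, (g x)^(2*u) ≤ (2:ℝ)^(R*K) * ((2*u-1:ℕ):ℝ)^(R*u) * Q^u := by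
      have hmm := main_ineq K u hm0 R Unit (fun σ _ => cc σ)
      have hUnit : ∀ f : Unit → ℝ, ∑ v : Unit, f v = f () := fun f => by simp
      have hL : ∑ x : Fin R → Fin K → Bool,
          (∑ v : Unit, (∑ σ : Fin R → Fin K, cc σ * chiSel σ x)^2)^u
          = ∑ x, (g x)^(2*u) := by
        apply Finset.sum_congr rfl
        intro x _
        rw [hUnit (fun _ => (∑ σ : Fin R → Fin K, cc σ * chiSel σ x)^2)]
        rw [← pow_mul]
      have hRr : ∑ σ : Fin R → Fin K, ∑ v : Unit, (cc σ)^2 = Q := by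
        rw [hQdef]
        apply Finset.sum_congr rfl
        intro σ _
        rw [hUnit (fun _ => (cc σ)^2)]
      rw [hL, hRr] at hmm
      exact hmm
    have hchain : Q^(2*u) ≤ (1+ε) * (2:ℝ)^(γ*((R:ℝ)*(K:ℝ))) * ((2*u-1:ℕ):ℝ)^(R*u) * Q^u := by
      have hQunn : (0:ℝ) ≤ Q^u := pow_nonneg hQ0 u
      calc Q^(2*u) ≤ ∑ x, μ x * (g x)^(2*u) := hjensen
        _ ≤ ∑ x, ((1+ε)/(T.card:ℝ)) * (g x)^(2*u) := by
            apply Finset.sum_le_sum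
            intro x _
            exact mul_le_mul_of_nonneg_right (hC0 x) (hgnn x)
        _ = ((1+ε)/(T.card:ℝ)) * ∑ x, (g x)^(2*u) := by rw [← Finset.mul_sum]
        _ ≤ ((1+ε)/(T.card:ℝ)) * ((2:ℝ)^(R*K) * ((2*u-1:ℕ):ℝ)^(R*u) * Q^u) := by
            apply mul_le_mul_of_nonneg_left hmain (div_nonneg hεp (le_of_lt hT0))
        _ = ((2:ℝ)^(R*K) * ((1+ε)/(T.card:ℝ))) * (((2*u-1:ℕ):ℝ)^(R*u) * Q^u) := by ring
        _ ≤ ((1+ε) * (2:ℝ)^(γ*((R:ℝ)*(K:ℝ)))) * (((2*u-1:ℕ):ℝ)^(R*u) * Q^u) := by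
            apply mul_le_mul_of_nonneg_right hpow
            exact mul_nonneg (by positivity) hQunn
        _ = (1+ε) * (2:ℝ)^(γ*((R:ℝ)*(K:ℝ))) * ((2*u-1:ℕ):ℝ)^(R*u) * Q^u := by ring
    rcases eq_or_lt_of_le hQ0 with hQz | hQpos
    · rw [← hQz]
      exact mul_nonneg (mul_nonneg (sq_nonneg (1+ε)) (pow_nonneg h4γ R)) (le_of_lt hKR0)
    · have hQu : (0:ℝ) < Q^u := pow_pos hQpos u
      have hQm : Q^u ≤ (1+ε) * (2:ℝ)^(γ*((R:ℝ)*(K:ℝ))) * ((2*u-1:ℕ):ℝ)^(R*u) := by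
        have h2 : Q^(2*u) = Q^u * Q^u := by rw [← pow_add]; congr 1; omega
        rw [h2] at hchain
        exact le_of_mul_le_mul_right hchain hQu
      set Cb : ℝ := (1+ε) * ((2:ℝ)^((γ*(K:ℝ))/(u:ℝ)) * (2*(u:ℝ)-1))^R with hCb
      have hB0 : (0:ℝ) ≤ (2:ℝ)^((γ*(K:ℝ))/(u:ℝ)) * (2*(u:ℝ)-1) :=
        mul_nonneg (Real.rpow_nonneg (by norm_num) _) (le_of_lt hn0)
      have hCb0 : (0:ℝ) ≤ Cb := mul_nonneg hεp (pow_nonneg hB0 R)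
      have hroot : Q^u ≤ Cb^u := by
        refine hQm.trans ?_
        have e1 : Cb^u = (1+ε)^u * (((2:ℝ)^((γ*(K:ℝ))/(u:ℝ)))^(R*u) * (2*(u:ℝ)-1)^(R*u)) := by
          rw [hCb, mul_pow, ← pow_mul, mul_pow]
        have e2 : ((2:ℝ)^((γ*(K:ℝ))/(u:ℝ)))^(R*u) = (2:ℝ)^(γ*((R:ℝ)*(K:ℝ))) := by
          rw [← Real.rpow_natCast ((2:ℝ)^((γ*(K:ℝ))/(u:ℝ))) (R*u), ← Real.rpow_mul (by norm_num)]
          congr 1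
          have huz : ((u:ℝ)) ≠ 0 := ne_of_gt hu0
          push_cast
          field_simp
        rw [e1, e2, hnval]
        have e4 : (1+ε) ≤ (1+ε)^u := le_self_pow₀ h1ε hm0
        have hFnn : (0:ℝ) ≤ (2:ℝ)^(γ*((R:ℝ)*(K:ℝ))) * (2*(u:ℝ)-1)^(R*u) :=
          mul_nonneg (Real.rpow_nonneg (by norm_num) _) (pow_nonneg (le_of_lt hn0) _)
        calc (1+ε) * (2:ℝ)^(γ*((R:ℝ)*(K:ℝ))) * (2*(u:ℝ)-1)^(R*u)
            = (1+ε) * ((2:ℝ)^(γ*((R:ℝ)*(K:ℝ))) * (2*(u:ℝ)-1)^(R*u)) := by ring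
          _ ≤ (1+ε)^u * ((2:ℝ)^(γ*((R:ℝ)*(K:ℝ))) * (2*(u:ℝ)-1)^(R*u)) :=
              mul_le_mul_of_nonneg_right e4 hFnn
      have hQC : Q ≤ Cb := le_of_pow_le_pow_left₀ hm0 hCb0 hroot
      apply hlast
      have hfin : (2:ℝ)^((γ*(K:ℝ))/(u:ℝ)) * (2*(u:ℝ)-1) ≤ 4*(γ*(K:ℝ)) := by
        calc (2:ℝ)^((γ*(K:ℝ))/(u:ℝ)) * (2*(u:ℝ)-1)
            = (2*(u:ℝ)-1) * (2:ℝ)^((γ*(K:ℝ))/(u:ℝ)) := by ring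
          _ ≤ 4*(γ*(K:ℝ)) := hKN
      calc Q ≤ Cb := hQC
        _ ≤ (1+ε) * (4*(γ*(K:ℝ)))^R := by
            rw [hCb]
            exact mul_le_mul_of_nonneg_left (pow_le_pow_left₀ hB0 hfin R) hεp
end
end
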